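/- For each n ∈ ℕ, the right comodule quotient E_r(n)/F·(n,n) of the incidence coalgebra C_ℕ is isomorphic as a right C_ℕ-comodule to E_r(n+1), and the left comodule quotient E_l(n)/F·(n,n) is isomorphic as a left comodule to E_l(n−1) (for n ≥ 1). -/

import Mathlib

/-!
Write `(a, b)` for the basis element of `C_ℕ`, read as `0` when `b < a`. The row shift
`(n, p) ↦ (n + 1, p)` maps the spanning family of `E_r(n)` onto that of `E_r(n + 1)` and sends
`(n, n)` to `0`; the reverse shift undoes it on every other `(n, p)`, so its kernel on `E_r(n)` is
exactly `F·(n, n)`. It is a comodule map because `Δ(a, b) = Σ_{z ≤ b} (a, z) ⊗ (z, b)`, a sum whose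
index range does not depend on `a`. The column shift `(k, n) ↦ (k, n - 1)` works the same way on
`E_l(n)`, using `(n, n - 1) = 0` for `n ≥ 1`.
-/

open TensorProduct

noncomputable section

variable (F : Type*) [Field F]

abbrev SegN := {p : ℕ × ℕ // p.1 ≤ p.2}

/-- The underlying space of the incidence coalgebra `C_ℕ`. -/
abbrev CN := SegN →₀ F

/-- The comultiplication of `C_ℕ`: `Δ((m,n)) = Σ_{m ≤ p ≤ n} (m,p) ⊗ (p,n)`. -/
def Δℕ : CN F →ₗ[F] CN F ⊗[F] CN F :=
  Finsupp.lift _ F _ fun b =>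
    ∑ z ∈ (Finset.Icc b.1.1 b.1.2).attach,
      Finsupp.single (⟨(b.1.1, z.1), (Finset.mem_Icc.mp z.2).1⟩ : SegN) (1 : F) ⊗ₜ[F]
        Finsupp.single (⟨(z.1, b.1.2), (Finset.mem_Icc.mp z.2).2⟩ : SegN) (1 : F)

/-- `E_r(n)`: the span of the basis elements `(n,p)`, `p ≥ n`. -/
def Er (n : ℕ) : Submodule F (CN F) :=
  Submodule.span F {v | ∃ (p : ℕ) (h : n ≤ p), v = Finsupp.single (⟨(n, p), h⟩ : SegN) (1 : F)}

/-- `E_l(n)`: the span of the basis elements `(k,n)`, `k ≤ n`. -/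
def El (n : ℕ) : Submodule F (CN F) :=
  Submodule.span F {v | ∃ (k : ℕ) (h : k ≤ n), v = Finsupp.single (⟨(k, n), h⟩ : SegN) (1 : F)}

/-- The line `F·(n,n)` spanned by the diagonal basis element `(n,n)`. -/
def diagLine (n : ℕ) : Submodule F (CN F) :=
  Submodule.span F {Finsupp.single (⟨(n, n), le_refl n⟩ : SegN) (1 : F)}

theorem Submodule.ker_inf_span_range_eq_span_singleton {R M N ι : Type*} [CommSemiring R]
    [AddCommMonoid M] [Module R M] [AddCommMonoid N] [Module R N] [DecidableEq ι]
    (u : ι → M) (i₀ : ι) (f : M →ₗ[R] N) (r : N →ₗ[R] M) (ev : M →ₗ[R] R)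
    (hf : f (u i₀) = 0) (hr : ∀ i ≠ i₀, r (f (u i)) = u i)
    (hev : ∀ i, ev (u i) = if i = i₀ then 1 else 0) :
    LinearMap.ker f ⊓ Submodule.span R (Set.range u) = R ∙ u i₀ := by
  have decompose : ∀ v ∈ Submodule.span R (Set.range u), r (f v) + ev v • u i₀ = v := by
    refine LinearMap.eqOn_span (f := r ∘ₗ f + ev.smulRight (u i₀)) (g := LinearMap.id) ?_
    rintro _ ⟨i, rfl⟩
    by_cases hi : i = i₀
    · subst hi
      simp [hf, hev]
    · simp [hr i hi, hev, hi]
  apply le_antisymm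
  · rintro v ⟨hker, hv⟩
    rw [← decompose v hv, LinearMap.mem_ker.mp hker, map_zero, zero_add]
    exact Submodule.smul_mem _ _ (Submodule.mem_span_singleton_self _)
  · rw [Submodule.span_singleton_le_iff_mem]
    exact ⟨hf, Submodule.subset_span ⟨i₀, rfl⟩⟩

/-- The basis element `(a, b)` of `C_ℕ`, read as `0` when `b < a`. -/
def seg (a b : ℕ) : CN F := if h : a ≤ b then Finsupp.single (⟨(a, b), h⟩ : SegN) (1 : F) else 0

variable {F}

lemma seg_of_le {a b : ℕ} (h : a ≤ b) : seg F a b = Finsupp.single (⟨(a, b), h⟩ : SegN) (1 : F) :=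
  dif_pos h

lemma seg_of_lt {a b : ℕ} (h : b < a) : seg F a b = 0 :=
  dif_neg (not_le.mpr h)

lemma seg_apply (a b : ℕ) (x : SegN) : seg F a b x = if x.1 = (a, b) then 1 else 0 := by
  unfold seg
  split_ifs with hab hx hx
  · rw [Finsupp.single_apply, if_pos (Subtype.ext hx.symm)]
  · rw [Finsupp.single_apply, if_neg fun h => hx (congrArg Subtype.val h).symm]
  · exact absurd (by simpa [hx] using x.2) hab
  · rfl

lemma Er_eq_span_range_seg (n : ℕ) : Er F n = Submodule.span F (Set.range (seg F n)) := by
  apply le_antisymm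
  · rw [Er, Submodule.span_le]
    rintro _ ⟨p, h, rfl⟩
    exact Submodule.subset_span ⟨p, seg_of_le h⟩
  · rw [Submodule.span_le]
    rintro _ ⟨p, rfl⟩
    rcases le_or_gt n p with h | h
    · exact Submodule.subset_span ⟨p, h, seg_of_le h⟩
    · rw [seg_of_lt h]
      exact zero_mem _

lemma El_eq_span_range_seg (n : ℕ) : El F n = Submodule.span F (Set.range fun k => seg F k n) := by
  apply le_antisymm
  · rw [El, Submodule.span_le]
    rintro _ ⟨k, h, rfl⟩
    exact Submodule.subset_span ⟨k, seg_of_le h⟩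
  · rw [Submodule.span_le]
    rintro _ ⟨k, rfl⟩
    show seg F k n ∈ El F n
    rcases le_or_gt k n with h | h
    · exact Submodule.subset_span ⟨k, h, seg_of_le h⟩
    · rw [seg_of_lt h]
      exact zero_mem _

lemma diagLine_eq_span_seg (n : ℕ) : diagLine F n = F ∙ seg F n n := by
  rw [diagLine, seg_of_le le_rfl]

lemma Δℕ_seg_eq_sum_Icc (a b : ℕ) :
    Δℕ F (seg F a b) = ∑ z ∈ Finset.Icc a b, seg F a z ⊗ₜ[F] seg F z b := by
  rcases le_or_gt a b with h | h
  · rw [seg_of_le h, Δℕ, Finsupp.lift_apply, Finsupp.sum_single_index (by rw [zero_smul]), one_smul,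
      ← Finset.sum_attach (Finset.Icc a b)]
    refine Finset.sum_congr rfl fun z _ => ?_
    rw [seg_of_le (Finset.mem_Icc.mp z.2).1, seg_of_le (Finset.mem_Icc.mp z.2).2]
  · rw [seg_of_lt h, Finset.Icc_eq_empty_of_lt h, map_zero, Finset.sum_empty]

/-- The summands with `z ∉ [a, b]` vanish, so the range of summation need not depend on `a`;
this is what makes the row and column shifts commute with `Δℕ`. -/
lemma Δℕ_seg_eq_sum_range {a b N : ℕ} (hN : b < N) :
    Δℕ F (seg F a b) = ∑ z ∈ Finset.range N, seg F a z ⊗ₜ[F] seg F z b := by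
  rw [Δℕ_seg_eq_sum_Icc]
  refine Finset.sum_subset (fun z hz => ?_) fun z _ hz => ?_
  · exact Finset.mem_range.mpr ((Finset.mem_Icc.mp hz).2.trans_lt hN)
  · rcases lt_or_ge z a with hza | haz
    · rw [seg_of_lt hza, zero_tmul]
    · rw [seg_of_lt (lt_of_not_ge fun hzb => hz (Finset.mem_Icc.mpr ⟨haz, hzb⟩)), tmul_zero]

variable (F)

def rowMove (m n : ℕ) : CN F →ₗ[F] CN F :=
  Finsupp.linearCombination F fun x => if x.1.1 = m then seg F n x.1.2 else 0

def colMove (m n : ℕ) : CN F →ₗ[F] CN F :=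
  Finsupp.linearCombination F fun x => if x.1.2 = m then seg F x.1.1 n else 0

variable {F}

lemma rowMove_seg {m b : ℕ} (n : ℕ) (h : m ≤ b) : rowMove F m n (seg F m b) = seg F n b := by
  rw [seg_of_le h, rowMove, Finsupp.linearCombination_single, one_smul, if_pos rfl]

lemma colMove_seg {a m : ℕ} (n : ℕ) (h : a ≤ m) : colMove F m n (seg F a m) = seg F a n := by
  rw [seg_of_le h, colMove, Finsupp.linearCombination_single, one_smul, if_pos rfl]

lemma rowMove_seg_succ (n p : ℕ) : rowMove F n (n + 1) (seg F n p) = seg F (n + 1) p := by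
  rcases le_or_gt n p with h | h
  · exact rowMove_seg _ h
  · rw [seg_of_lt h, map_zero, seg_of_lt (by omega)]

lemma colMove_seg_pred {n : ℕ} (hn : 1 ≤ n) (k : ℕ) :
    colMove F n (n - 1) (seg F k n) = seg F k (n - 1) := by
  rcases le_or_gt k n with h | h
  · exact colMove_seg _ h
  · rw [seg_of_lt h, map_zero, seg_of_lt (by omega)]

theorem exists_rightComodule_map_Er_eq_Er_succ (n : ℕ) :
    ∃ ψ : CN F →ₗ[F] CN F,
      Submodule.map ψ (Er F n) = Er F (n + 1) ∧
      LinearMap.ker ψ ⊓ Er F n = diagLine F n ∧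
      ∀ v ∈ Er F n, Δℕ F (ψ v) = LinearMap.rTensor (CN F) ψ (Δℕ F v) := by
  refine ⟨rowMove F n (n + 1), ?_, ?_, ?_⟩
  · rw [Er_eq_span_range_seg, Er_eq_span_range_seg, Submodule.map_span, ← Set.range_comp]
    exact congrArg _ (congrArg _ (funext (rowMove_seg_succ n)))
  · rw [Er_eq_span_range_seg, diagLine_eq_span_seg]
    refine Submodule.ker_inf_span_range_eq_span_singleton _ n _ (rowMove F (n + 1) n)
      (Finsupp.lapply ⟨(n, n), le_rfl⟩) ?_ (fun p hp => ?_) fun p => ?_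
    · rw [rowMove_seg_succ, seg_of_lt (Nat.lt_succ_self n)]
    · rw [rowMove_seg_succ]
      rcases lt_or_gt_of_ne hp with h | h
      · rw [seg_of_lt h, seg_of_lt (h.trans (Nat.lt_succ_self n)), map_zero]
      · exact rowMove_seg _ h
    · simp [seg_apply, eq_comm]
  · rw [Er_eq_span_range_seg]
    refine LinearMap.eqOn_span (f := Δℕ F ∘ₗ rowMove F n (n + 1))
      (g := LinearMap.rTensor (CN F) (rowMove F n (n + 1)) ∘ₗ Δℕ F) ?_
    rintro _ ⟨p, rfl⟩
    simp only [LinearMap.comp_apply, rowMove_seg_succ, Δℕ_seg_eq_sum_range (Nat.lt_succ_self p),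
      map_sum, LinearMap.rTensor_tmul]

theorem exists_leftComodule_map_El_eq_El_pred {n : ℕ} (hn : 1 ≤ n) :
    ∃ φ : CN F →ₗ[F] CN F,
      Submodule.map φ (El F n) = El F (n - 1) ∧
      LinearMap.ker φ ⊓ El F n = diagLine F n ∧
      ∀ v ∈ El F n, Δℕ F (φ v) = LinearMap.lTensor (CN F) φ (Δℕ F v) := by
  refine ⟨colMove F n (n - 1), ?_, ?_, ?_⟩
  · rw [El_eq_span_range_seg, El_eq_span_range_seg, Submodule.map_span, ← Set.range_comp]
    exact congrArg _ (congrArg _ (funext (colMove_seg_pred hn)))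
  · rw [El_eq_span_range_seg, diagLine_eq_span_seg]
    refine Submodule.ker_inf_span_range_eq_span_singleton _ n _ (colMove F (n - 1) n)
      (Finsupp.lapply ⟨(n, n), le_rfl⟩) ?_ (fun k hk => ?_) fun k => ?_
    · rw [colMove_seg_pred hn, seg_of_lt (by omega)]
    · rw [colMove_seg_pred hn]
      rcases lt_or_gt_of_ne hk with h | h
      · exact colMove_seg _ (by omega)
      · rw [seg_of_lt (by omega), seg_of_lt h, map_zero]
    · simp [seg_apply, eq_comm]
  · rw [El_eq_span_range_seg]
    refine LinearMap.eqOn_span (f := Δℕ F ∘ₗ colMove F n (n - 1))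
      (g := LinearMap.lTensor (CN F) (colMove F n (n - 1)) ∘ₗ Δℕ F) ?_
    rintro _ ⟨k, rfl⟩
    simp only [LinearMap.comp_apply, colMove_seg_pred hn,
      Δℕ_seg_eq_sum_range (show n - 1 < n + 1 by omega), Δℕ_seg_eq_sum_range (Nat.lt_succ_self n),
      map_sum, LinearMap.lTensor_tmul]

theorem statement15 (n : ℕ) :
    (∃ ψ : CN F →ₗ[F] CN F,
      Submodule.map ψ (Er F n) = Er F (n + 1) ∧
      LinearMap.ker ψ ⊓ Er F n = diagLine F n ∧
      ∀ v ∈ Er F n, Δℕ F (ψ v) = LinearMap.rTensor (CN F) ψ (Δℕ F v)) ∧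
    (1 ≤ n → ∃ φ : CN F →ₗ[F] CN F,
      Submodule.map φ (El F n) = El F (n - 1) ∧
      LinearMap.ker φ ⊓ El F n = diagLine F n ∧
      ∀ v ∈ El F n, Δℕ F (φ v) = LinearMap.lTensor (CN F) φ (Δℕ F v)) :=
  ⟨exists_rightComodule_map_Er_eq_Er_succ n, fun hn => exists_leftComodule_map_El_eq_El_pred hn⟩
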